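/- Let (Ω, F, P) be a probability space and φ a bounded random variable. Then -ln(E_P[e^φ]) = inf over probability measures Q absolutely continuous with respect to P of (E_Q[-φ] + H(Q|P)), where H(Q|P) = E_Q[ln(dQ/dP)] is the relative entropy. Moreover, the infimum is attained by the measure Q* with dQ*/dP = e^φ / E_P[e^φ]. -/

import Mathlib

open MeasureTheory Real Classical

/-- Aggregate (here: static) relative entropy `H(Q|P) = E_Q[log (dQ/dP)]`,
set to `+∞` when the log-density is not `Q`-integrable. -/
noncomputable def relEntropy {Ω : Type*} [MeasurableSpace Ω] (Q P : Measure Ω) : EReal :=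
  if Integrable (fun ω => Real.log ((Q.rnDeriv P ω).toReal)) Q then
    (((∫ ω, Real.log ((Q.rnDeriv P ω).toReal) ∂Q) : ℝ) : EReal)
  else ⊤

/-!
For every `Q ≪ P` with integrable log-likelihood ratio, the tilting identity gives
`E_Q[-φ] + H(Q|P) = -log E_P[e^φ] + H(Q|P^φ)`, where `P^φ = P.tilted φ` is the Gibbs measure
`dP^φ/dP = e^φ / E_P[e^φ]`. Gibbs' inequality `H(Q|P^φ) ≥ 0` gives the lower bound, and at
`Q = P^φ` the log-density is `φ - log E_P[e^φ]`, so the bound is attained.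
-/

section

variable {Ω : Type*} [MeasurableSpace Ω] {P Q : Measure Ω} {φ : Ω → ℝ}

lemma relEntropy_of_integrable (h : Integrable (llr Q P) Q) :
    relEntropy Q P = ((∫ ω, llr Q P ω ∂Q : ℝ) : EReal) :=
  if_pos h

lemma relEntropy_of_not_integrable (h : ¬ Integrable (llr Q P) Q) : relEntropy Q P = ⊤ :=
  if_neg h

lemma integral_llr_nonneg [IsProbabilityMeasure Q] [IsProbabilityMeasure P] (hQP : Q ≪ P)
    (h : Integrable (llr Q P) Q) : 0 ≤ ∫ ω, llr Q P ω ∂Q := by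
  simpa using InformationTheory.integral_llr_add_sub_measure_univ_nonneg hQP h

lemma neg_log_integral_exp_le_integral_neg_add_integral_llr
    [IsProbabilityMeasure Q] [IsProbabilityMeasure P] (hQP : Q ≪ P) (hφQ : Integrable φ Q)
    (hφP : Integrable (fun ω ↦ exp (φ ω)) P) (h : Integrable (llr Q P) Q) :
    -log (∫ ω, exp (φ ω) ∂P) ≤ ∫ ω, -φ ω ∂Q + ∫ ω, llr Q P ω ∂Q := by
  have := isProbabilityMeasure_tilted hφP
  have hQ_tilted : Q ≪ P.tilted φ := hQP.trans (absolutelyContinuous_tilted hφP)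
  have gibbs := integral_llr_nonneg hQ_tilted (integrable_llr_tilted_right hQP hφQ h hφP)
  rw [integral_llr_tilted_right hQP hφQ hφP h] at gibbs
  rw [integral_neg]
  linarith

lemma neg_log_integral_exp_le_integral_neg_add_relEntropy
    [IsProbabilityMeasure Q] [IsProbabilityMeasure P] (hQP : Q ≪ P) (hφQ : Integrable φ Q)
    (hφP : Integrable (fun ω ↦ exp (φ ω)) P) :
    ((-log (∫ ω, exp (φ ω) ∂P) : ℝ) : EReal) ≤ ((∫ ω, -φ ω ∂Q : ℝ) : EReal) + relEntropy Q P := by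
  by_cases h : Integrable (llr Q P) Q
  · rw [relEntropy_of_integrable h, ← EReal.coe_add, EReal.coe_le_coe_iff]
    exact neg_log_integral_exp_le_integral_neg_add_integral_llr hQP hφQ hφP h
  · rw [relEntropy_of_not_integrable h, EReal.coe_add_top]
    exact le_top

lemma llr_tilted_self_ae_eq [SigmaFinite P] (hφP : Integrable (fun ω ↦ exp (φ ω)) P) :
    llr (P.tilted φ) P =ᵐ[P.tilted φ] fun ω ↦ φ ω - log (∫ ω, exp (φ ω) ∂P) :=
  (tilted_absolutelyContinuous P φ).ae_le (log_rnDeriv_tilted_left_self hφP)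

lemma integral_neg_add_relEntropy_tilted_self [SigmaFinite P] [NeZero P]
    (hφP : Integrable (fun ω ↦ exp (φ ω)) P) (hφ : Integrable φ (P.tilted φ)) :
    ((∫ ω, -φ ω ∂P.tilted φ : ℝ) : EReal) + relEntropy (P.tilted φ) P =
      ((-log (∫ ω, exp (φ ω) ∂P) : ℝ) : EReal) := by
  have := isProbabilityMeasure_tilted hφP
  have h_llr := llr_tilted_self_ae_eq hφP
  have h_int : Integrable (llr (P.tilted φ) P) (P.tilted φ) :=
    (integrable_congr h_llr).mpr (hφ.sub (integrable_const _))
  rw [relEntropy_of_integrable h_int, ← EReal.coe_add, EReal.coe_eq_coe_iff,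
    integral_congr_ae h_llr, integral_neg, integral_sub hφ (integrable_const _)]
  simp only [integral_const, probReal_univ, smul_eq_mul, one_mul]
  ring

lemma integrable_of_abs_le [IsFiniteMeasure Q] (hφ : Measurable φ) {C : ℝ}
    (hC : ∀ ω, |φ ω| ≤ C) : Integrable φ Q :=
  .of_bound hφ.aestronglyMeasurable C (.of_forall hC)

lemma integrable_exp_of_abs_le [IsFiniteMeasure Q] (hφ : Measurable φ) {C : ℝ}
    (hC : ∀ ω, |φ ω| ≤ C) : Integrable (fun ω ↦ exp (φ ω)) Q :=
  .of_bound hφ.exp.aestronglyMeasurable (exp C) <| .of_forall fun ω ↦ by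
    rw [norm_eq_abs, abs_exp]
    exact exp_le_exp.mpr ((le_abs_self _).trans (hC ω))

end

/-- Gibbs / Donsker–Varadhan variational formula: for a bounded random variable `φ`,
`-log E_P[e^φ] = inf_{Q ≪ P} (E_Q[-φ] + H(Q|P))`, the infimum being attained at the
tilted measure `dQ*/dP = e^φ / E_P[e^φ]`. -/
theorem gibbs_variational_formula
    {Ω : Type*} [MeasurableSpace Ω] (P : Measure Ω) [IsProbabilityMeasure P]
    (φ : Ω → ℝ) (hφ : Measurable φ) (C : ℝ) (hC : ∀ ω, |φ ω| ≤ C)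
    (Qstar : Measure Ω)
    (hQstar : Qstar = P.withDensity
      (fun ω => ENNReal.ofReal (Real.exp (φ ω) / ∫ ω', Real.exp (φ ω') ∂P))) :
    (((- Real.log (∫ ω, Real.exp (φ ω) ∂P)) : ℝ) : EReal) =
      (⨅ Q : {Q : Measure Ω // IsProbabilityMeasure Q ∧ Q ≪ P},
        ((((∫ ω, -φ ω ∂(Q : Measure Ω))) : ℝ) : EReal) + relEntropy (Q : Measure Ω) P) ∧
    ((((∫ ω, -φ ω ∂Qstar)) : ℝ) : EReal) + relEntropy Qstar P =
      (((- Real.log (∫ ω, Real.exp (φ ω) ∂P)) : ℝ) : EReal) := by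
  have hφP := integrable_exp_of_abs_le (Q := P) hφ hC
  have hQstar_tilted : Qstar = P.tilted φ := hQstar
  subst hQstar_tilted
  have := isProbabilityMeasure_tilted hφP
  have attained := integral_neg_add_relEntropy_tilted_self hφP (integrable_of_abs_le hφ hC)
  refine ⟨le_antisymm ?_ ?_, attained⟩
  · refine le_iInf fun ⟨Q, hQ, hQP⟩ ↦ ?_
    exact neg_log_integral_exp_le_integral_neg_add_relEntropy hQP (integrable_of_abs_le hφ hC) hφP
  · exact (iInf_le _ ⟨P.tilted φ, inferInstance, tilted_absolutelyContinuous P φ⟩).trans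
      attained.le
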